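/- arXiv:1108.0239 — 5 statements merged into one kernel-verified Lean document; each statement's English description precedes it below -/
import Mathlib

section
/- Let A ∈ ℝ^{d×d} with ρ(A) < 1 and suppose D ∈ ℝ^{d×d} is symmetric positive-definite with D - AᵀDA positive semidefinite. Then D - (A^d)ᵀ D A^d is positive-definite. -/
/-! The energy `q y = yᵀ D y` does not increase along the orbit `Aᵏ x`, and a step at which it
does not drop puts the current iterate in the kernel of the semidefinite matrix `D - AᵀDA`.
If `q (Aᵈ x) ≥ q x`, the first `d` iterates therefore all lie in that kernel; by Cayley–Hamilton
they span every iterate, so `q` is constant along the whole orbit. But `ρ(A) < 1` forces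
`Aᵏ → 0` (Gelfand's formula), hence `q x = 0` and `x = 0`. -/

open Matrix Filter
open scoped ENNReal

noncomputable def Pnorm {d : ℕ} (P : Matrix (Fin d) (Fin d) ℝ) (x : Fin d → ℝ) : ℝ :=
  Real.sqrt (x ⬝ᵥ P.mulVec x)

noncomputable def PopNorm {d : ℕ} (P A : Matrix (Fin d) (Fin d) ℝ) : ℝ :=
  sSup ((fun x => Pnorm P (A.mulVec x)) '' {x | Pnorm P x = 1})

noncomputable def PcoNorm {d : ℕ} (P A : Matrix (Fin d) (Fin d) ℝ) : ℝ :=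
  sInf ((fun x => Pnorm P (A.mulVec x)) '' {x | Pnorm P x = 1})

noncomputable def specRad {d : ℕ} (A : Matrix (Fin d) (Fin d) ℝ) : ℝ≥0∞ :=
  spectralRadius ℂ (A.map Complex.ofReal)

def prodsW {d K : ℕ} (S : Fin K → Matrix (Fin d) (Fin d) ℝ) (σ : ℕ → Fin K) :
    ℕ → Matrix (Fin d) (Fin d) ℝ
  | 0 => 1
  | n + 1 => S (σ n) * prodsW S σ n

def omegaSet {d K : ℕ} (S : Fin K → Matrix (Fin d) (Fin d) ℝ) (σ : ℕ → Fin K) :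
    Set (Matrix (Fin d) (Fin d) ℝ) :=
  {M | ∃ φ : ℕ → ℕ, StrictMono φ ∧ Tendsto (fun i => prodsW S σ (φ i)) atTop (nhds M)}

open Topology Polynomial

theorem tendsto_pow_atTop_nhds_zero_of_spectralRadius_lt_one {𝔸 : Type*} [NormedRing 𝔸]
    [NormedAlgebra ℂ 𝔸] [CompleteSpace 𝔸] {a : 𝔸} (h : spectralRadius ℂ a < 1) :
    Tendsto (a ^ ·) atTop (𝓝 0) := by
  obtain ⟨c, hac, hc1⟩ := ENNReal.lt_iff_exists_nnreal_btwn.mp h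
  have hbound : ∀ᶠ k : ℕ in atTop, ‖a ^ k‖ ≤ (c : ℝ) ^ k := by
    filter_upwards
      [(spectrum.pow_nnnorm_pow_one_div_tendsto_nhds_spectralRadius a).eventually_lt_const hac,
      eventually_gt_atTop 0] with k hk hk0
    rw [← ENNReal.coe_rpow_of_nonneg _ (by positivity), ENNReal.coe_lt_coe, one_div,
      NNReal.rpow_inv_lt_iff (by positivity), NNReal.rpow_natCast] at hk
    exact_mod_cast hk.le
  exact squeeze_zero_norm' hbound
    (tendsto_pow_atTop_nhds_zero_of_lt_one c.coe_nonneg (by exact_mod_cast hc1))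

section

attribute [local instance] Matrix.linftyOpNormedRing Matrix.linftyOpNormedAlgebra

theorem Matrix.tendsto_pow_atTop_nhds_zero_of_spectralRadius_lt_one {n : Type*} [Fintype n]
    [DecidableEq n] {A : Matrix n n ℝ} (h : spectralRadius ℂ (A.map Complex.ofReal) < 1) :
    Tendsto (A ^ ·) atTop (𝓝 0) := by
  have hmap : Tendsto (fun k : ℕ => (A ^ k).map Complex.ofReal) atTop (𝓝 0) := by
    have hpow (k : ℕ) : (A ^ k).map Complex.ofReal = A.map Complex.ofReal ^ k :=
      map_pow (Complex.ofRealHom.mapMatrix (m := n)) A k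
    simp only [hpow]
    -- the operator-norm topology is the product topology only up to unfolding instances,
    -- so this needs `exact` rather than `simpa`
    exact _root_.tendsto_pow_atTop_nhds_zero_of_spectralRadius_lt_one h
  have hre := ((continuous_id.matrix_map Complex.continuous_re).tendsto 0).comp hmap
  simpa [Function.comp_def, Matrix.map_map] using hre

end

namespace Matrix

variable {n R : Type*} [Fintype n]

theorem pow_mulVec_mem_span_pow_mulVec [DecidableEq n] [CommRing R] [Nontrivial R]
    (A : Matrix n n R) (x : n → R) (k : ℕ) :
    A ^ k *ᵥ x ∈ Submodule.span R ((fun i => A ^ i *ᵥ x) '' Set.Iio (Fintype.card n)) := by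
  rw [pow_eq_aeval_mod_charpoly]
  set r := X ^ k %ₘ A.charpoly
  rcases eq_or_ne r 0 with hr | hr
  · rw [hr, map_zero, zero_mulVec]
    exact Submodule.zero_mem _
  have hdeg : r.natDegree < Fintype.card n := by
    rw [← A.charpoly_natDegree_eq_dim]
    exact natDegree_lt_natDegree hr (degree_modByMonic_lt _ A.charpoly_monic)
  rw [aeval_eq_sum_range' hdeg, sum_mulVec]
  refine Submodule.sum_mem _ fun i hi => ?_
  rw [smul_mulVec]
  exact Submodule.smul_mem _ _ (Submodule.subset_span ⟨i, Finset.mem_range.mp hi, rfl⟩)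

theorem mulVec_pow_mulVec_eq_zero_of_forall_lt_card [DecidableEq n] [CommRing R]
    [Nontrivial R] {A P : Matrix n n R} {x : n → R}
    (h : ∀ i < Fintype.card n, P *ᵥ (A ^ i *ᵥ x) = 0) (k : ℕ) :
    P *ᵥ (A ^ k *ᵥ x) = 0 := by
  have hspan : Submodule.span R ((fun i => A ^ i *ᵥ x) '' Set.Iio (Fintype.card n)) ≤
      LinearMap.ker P.mulVecLin := by
    rw [Submodule.span_le]
    rintro _ ⟨i, hi, rfl⟩
    exact h i hi
  exact hspan (pow_mulVec_mem_span_pow_mulVec A x k)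

theorem dotProduct_sub_transpose_mul_mul_mulVec [CommRing R] (D C : Matrix n n R) (y : n → R) :
    y ⬝ᵥ (D - Cᵀ * D * C) *ᵥ y = y ⬝ᵥ D *ᵥ y - C *ᵥ y ⬝ᵥ D *ᵥ (C *ᵥ y) := by
  rw [sub_mulVec, dotProduct_sub, ← mulVec_mulVec, ← mulVec_mulVec, dotProduct_mulVec y Cᵀ,
    vecMul_transpose]

variable {A D : Matrix n n ℝ}

theorem dotProduct_mulVec_le_of_posSemidef_sub (h : (D - Aᵀ * D * A).PosSemidef) (y : n → ℝ) :
    A *ᵥ y ⬝ᵥ D *ᵥ (A *ᵥ y) ≤ y ⬝ᵥ D *ᵥ y := by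
  have hy := h.dotProduct_mulVec_nonneg y
  rwa [star_trivial, dotProduct_sub_transpose_mul_mul_mulVec, sub_nonneg] at hy

variable [DecidableEq n]

theorem antitone_dotProduct_pow_mulVec (h : (D - Aᵀ * D * A).PosSemidef) (x : n → ℝ) :
    Antitone fun k => A ^ k *ᵥ x ⬝ᵥ D *ᵥ (A ^ k *ᵥ x) :=
  antitone_nat_of_succ_le fun k => by
    simpa only [pow_succ', ← mulVec_mulVec] using
      dotProduct_mulVec_le_of_posSemidef_sub h (A ^ k *ᵥ x)

theorem sub_mulVec_pow_mulVec_eq_zero_of_le (h : (D - Aᵀ * D * A).PosSemidef) {x : n → ℝ}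
    {m : ℕ} (hm : x ⬝ᵥ D *ᵥ x ≤ A ^ m *ᵥ x ⬝ᵥ D *ᵥ (A ^ m *ᵥ x)) {i : ℕ} (hi : i < m) :
    (D - Aᵀ * D * A) *ᵥ (A ^ i *ᵥ x) = 0 := by
  have hanti := antitone_dotProduct_pow_mulVec h x
  have hi_le_zero : A ^ i *ᵥ x ⬝ᵥ D *ᵥ (A ^ i *ᵥ x) ≤ x ⬝ᵥ D *ᵥ x := by
    simpa only [pow_zero, one_mulVec] using hanti (Nat.zero_le i)
  have hm_le_succ : A ^ m *ᵥ x ⬝ᵥ D *ᵥ (A ^ m *ᵥ x) ≤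
      A ^ (i + 1) *ᵥ x ⬝ᵥ D *ᵥ (A ^ (i + 1) *ᵥ x) :=
    hanti hi
  have hsucc_le_i : A ^ (i + 1) *ᵥ x ⬝ᵥ D *ᵥ (A ^ (i + 1) *ᵥ x) ≤
      A ^ i *ᵥ x ⬝ᵥ D *ᵥ (A ^ i *ᵥ x) :=
    hanti i.le_succ
  rw [← h.dotProduct_mulVec_zero_iff, star_trivial, dotProduct_sub_transpose_mul_mul_mulVec,
    mulVec_mulVec x A, ← pow_succ']
  linarith

theorem dotProduct_pow_mulVec_eq_of_le (h : (D - Aᵀ * D * A).PosSemidef) {x : n → ℝ}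
    (hle : x ⬝ᵥ D *ᵥ x ≤ A ^ Fintype.card n *ᵥ x ⬝ᵥ D *ᵥ (A ^ Fintype.card n *ᵥ x)) (k : ℕ) :
    A ^ k *ᵥ x ⬝ᵥ D *ᵥ (A ^ k *ᵥ x) = x ⬝ᵥ D *ᵥ x := by
  induction k with
  | zero => rw [pow_zero, one_mulVec]
  | succ k ih =>
    have hker := mulVec_pow_mulVec_eq_zero_of_forall_lt_card
      (fun i hi => sub_mulVec_pow_mulVec_eq_zero_of_le h hle hi) k
    have hk := congrArg (A ^ k *ᵥ x ⬝ᵥ ·) hker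
    rw [dotProduct_zero, dotProduct_sub_transpose_mul_mul_mulVec, mulVec_mulVec x A,
      ← pow_succ', ih, sub_eq_zero] at hk
    exact hk.symm

theorem PosDef.sub_transpose_pow_card_mul_mul_pow_card (hA : Tendsto (A ^ ·) atTop (𝓝 0))
    (hD : D.PosDef) (h : (D - Aᵀ * D * A).PosSemidef) :
    (D - (A ^ Fintype.card n)ᵀ * D * A ^ Fintype.card n).PosDef := by
  refine PosDef.of_dotProduct_mulVec_pos
    (hD.1.sub (by simpa using isHermitian_conjTranspose_mul_mul (A ^ Fintype.card n) hD.1))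
    fun x hx => ?_
  rw [star_trivial, dotProduct_sub_transpose_mul_mul_mulVec, sub_pos]
  by_contra! hle
  have hcont : Continuous fun M : Matrix n n ℝ => M *ᵥ x ⬝ᵥ D *ᵥ (M *ᵥ x) := by fun_prop
  have hlim := (hcont.tendsto 0).comp hA
  simp only [Function.comp_def, dotProduct_pow_mulVec_eq_of_le h hle, zero_mulVec,
    zero_dotProduct] at hlim
  have hx0 : x ⬝ᵥ D *ᵥ x = 0 := tendsto_nhds_unique tendsto_const_nhds hlim
  simpa [hx0] using hD.dotProduct_mulVec_pos hx

end Matrix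

theorem stmt7 {d : ℕ} (A D : Matrix (Fin d) (Fin d) ℝ)
    (hrho : specRad A < 1) (hD : D.PosDef)
    (h : (D - Aᵀ * D * A).PosSemidef) :
    (D - (A ^ d)ᵀ * D * A ^ d).PosDef := by
  simpa using PosDef.sub_transpose_pow_card_mul_mul_pow_card
    (Matrix.tendsto_pow_atTop_nhds_zero_of_spectralRadius_lt_one hrho) hD h
end

section
/- Let S₁,…,S_K ∈ ℝ^{d×d} satisfy the weak Lyapunov condition P - S_kᵀPS_k ≥ 0 for a common symmetric positive-definite P. For a switching signal σ, let ω(σ) denote the set of limit points in ℝ^{d×d} of the sequence ⟨S_{σ(n)}⋯S_{σ(1)}⟩. Then for any two elements M, N ∈ ω(σ), MᵀPM = NᵀPN. -/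
open Matrix Filter
open scoped ENNReal

/-!
For a fixed vector `x`, the `P`-energy `yₙᵀ P yₙ` of `yₙ = prodsW S σ n *ᵥ x` is nonincreasing
in `n` by the Lyapunov inequality, so all its subsequential limits coincide. By
continuity `xᵀ Mᵀ P M x` is then the same number for every `M ∈ ω(σ)`, and a symmetric matrix is
determined by its quadratic form.
-/

open Topology

theorem Antitone.eq_of_tendsto_comp_strictMono {α : Type*} [TopologicalSpace α] [PartialOrder α]
    [OrderClosedTopology α] {f : ℕ → α} (hf : Antitone f) {φ ψ : ℕ → ℕ} (hφ : StrictMono φ)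
    (hψ : StrictMono ψ) {a b : α} (ha : Tendsto (f ∘ φ) atTop (𝓝 a))
    (hb : Tendsto (f ∘ ψ) atTop (𝓝 b)) : a = b := by
  have le_of_subseq {χ : ℕ → ℕ} (hχ : StrictMono χ) {c : α} (hc : Tendsto (f ∘ χ) atTop (𝓝 c))
      (n : ℕ) : c ≤ f n :=
    ((hf.comp_monotone hχ.monotone).le_of_tendsto hc n).trans (hf (hχ.id_le n))
  exact le_antisymm (ge_of_tendsto' hb fun i => le_of_subseq hφ ha (ψ i))
    (ge_of_tendsto' ha fun i => le_of_subseq hψ hb (φ i))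

namespace Matrix

variable {n R : Type*} [Fintype n]

theorem IsSymm.ext_of_dotProduct_mulVec [DecidableEq n] [CommRing R] [IsAddTorsionFree R]
    {A B : Matrix n n R} (hA : A.IsSymm) (hB : B.IsSymm)
    (h : ∀ x, x ⬝ᵥ A *ᵥ x = x ⬝ᵥ B *ᵥ x) : A = B := by
  have diag (i : n) : A i i = B i i := by
    simpa [mulVec_single, dotProduct_single] using h (Pi.single i 1)
  ext i j
  have := h (Pi.single i 1 + Pi.single j 1)
  simp only [mulVec_add, mulVec_single_one, col_apply, dotProduct_add, add_dotProduct,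
    single_dotProduct, one_mul] at this
  rw [diag i, diag j, hA.apply i j, hB.apply i j] at this
  have hdouble : 2 • A i j = 2 • B i j := by
    rw [two_nsmul, two_nsmul]; linear_combination this
  exact nsmul_right_injective two_ne_zero hdouble

theorem IsSymm.transpose_mul_mul [CommSemiring R] {P : Matrix n n R} (hP : P.IsSymm)
    (A : Matrix n n R) : (Aᵀ * P * A).IsSymm := by
  simp [IsSymm, transpose_mul, hP.eq, Matrix.mul_assoc]

theorem dotProduct_transpose_mul_mul_mulVec [CommSemiring R] (A P : Matrix n n R) (x y : n → R) :
    x ⬝ᵥ (Aᵀ * P * A) *ᵥ y = (A *ᵥ x) ⬝ᵥ P *ᵥ (A *ᵥ y) := by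
  rw [← mulVec_mulVec, ← mulVec_mulVec, dotProduct_mulVec, vecMul_transpose]

theorem dotProduct_mulVec_mulVec_le_of_posSemidef_sub {P S : Matrix n n ℝ}
    (h : (P - Sᵀ * P * S).PosSemidef) (y : n → ℝ) :
    (S *ᵥ y) ⬝ᵥ P *ᵥ (S *ᵥ y) ≤ y ⬝ᵥ P *ᵥ y := by
  have := h.dotProduct_mulVec_nonneg y
  rw [star_trivial, sub_mulVec, dotProduct_sub, dotProduct_transpose_mul_mul_mulVec] at this
  linarith

end Matrix

theorem antitone_prodsW_dotProduct_mulVec {d K : ℕ} {S : Fin K → Matrix (Fin d) (Fin d) ℝ}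
    {P : Matrix (Fin d) (Fin d) ℝ} (hL : ∀ k, (P - (S k)ᵀ * P * S k).PosSemidef) (σ : ℕ → Fin K)
    (x : Fin d → ℝ) :
    Antitone fun n => (prodsW S σ n *ᵥ x) ⬝ᵥ P *ᵥ (prodsW S σ n *ᵥ x) :=
  antitone_nat_of_succ_le fun n => by
    simpa only [prodsW, ← mulVec_mulVec] using
      dotProduct_mulVec_mulVec_le_of_posSemidef_sub (hL (σ n)) (prodsW S σ n *ᵥ x)

theorem eq_of_mem_omegaSet_of_antitone {d K : ℕ} {S : Fin K → Matrix (Fin d) (Fin d) ℝ}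
    {σ : ℕ → Fin K} {α : Type*} [TopologicalSpace α] [PartialOrder α] [OrderClosedTopology α]
    {g : Matrix (Fin d) (Fin d) ℝ → α} (hg : Continuous g) (hanti : Antitone (g ∘ prodsW S σ))
    {M N : Matrix (Fin d) (Fin d) ℝ} (hM : M ∈ omegaSet S σ) (hN : N ∈ omegaSet S σ) :
    g M = g N := by
  obtain ⟨φ, hφ, hMφ⟩ := hM
  obtain ⟨ψ, hψ, hNψ⟩ := hN
  exact hanti.eq_of_tendsto_comp_strictMono hφ hψ ((hg.tendsto M).comp hMφ)
    ((hg.tendsto N).comp hNψ)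

theorem stmt10 {d K : ℕ} (S : Fin K → Matrix (Fin d) (Fin d) ℝ)
    (P : Matrix (Fin d) (Fin d) ℝ) (hP : P.PosDef)
    (hL : ∀ k, (P - (S k)ᵀ * P * S k).PosSemidef)
    (σ : ℕ → Fin K) :
    ∀ M ∈ omegaSet S σ, ∀ N ∈ omegaSet S σ, Mᵀ * P * M = Nᵀ * P * N := by
  intro M hM N hN
  have hPsymm : P.IsSymm := isHermitian_iff_isSymm.mp hP.isHermitian
  refine (hPsymm.transpose_mul_mul M).ext_of_dotProduct_mulVec (hPsymm.transpose_mul_mul N)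
    fun x => ?_
  simp only [dotProduct_transpose_mul_mul_mulVec]
  exact eq_of_mem_omegaSet_of_antitone (g := fun A => (A *ᵥ x) ⬝ᵥ P *ᵥ (A *ᵥ x))
    (by fun_prop) (antitone_prodsW_dotProduct_mulVec hL σ x) hM hN
end

section
/- Let T : Ω → Ω be a continuous transformation of a separable metrizable space and A : Ω → ℝ^{d×d} continuous, with a norm ‖·‖ on ℝ^d such that the cocycle A_T(n,w) = A(T^{n-1}w)⋯A(w) satisfies ‖A_T(n,w)‖ ≤ 1 for all n ≥ 1 and w ∈ Ω. If w is a weakly Birkhoff recurrent point of T and there exist i ≥ 0 and n ≥ 1 with ‖A_T(n, T^i w)‖ < 1, then ‖A_T(n,w)‖ → 0 exponentially fast as n → ∞; otherwise ‖A_T(n, T^i w)‖ = 1 for all i ≥ 0 and n ≥ 1. -/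
open Matrix Filter
open scoped ENNReal

noncomputable def opNu {d : ℕ} (ν : (Fin d → ℝ) → ℝ) (A : Matrix (Fin d) (Fin d) ℝ) : ℝ :=
  sSup ((fun x => ν (A.mulVec x)) '' {x | ν x = 1})

def coc {d : ℕ} {Ω : Type*} (T : Ω → Ω) (A : Ω → Matrix (Fin d) (Fin d) ℝ) :
    ℕ → Ω → Matrix (Fin d) (Fin d) ℝ
  | 0, _ => 1
  | n + 1, w => A (T^[n] w) * coc T A n w

/-!
Norming `ℝ^d` by `ν` makes `opNu ν` an operator norm: it is submultiplicative, and continuous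
because the space is finite-dimensional. Hence `a n u = opNu ν (coc T A n u)` is a
submultiplicative cocycle bounded by `1`, continuous in `u`, and `n ↦ a n w` is nonincreasing.
If `a n (T^[i] w) < 1`, then `a m w < θ < 1` for `m = i + n + 1`, and `a m u < θ` on a ball
around `w`, so each return of the orbit to that ball contracts the next `m` steps by `θ`.
Weak Birkhoff recurrence gives `j * m` returns before time `j * m * N`, and among them `j` that
are `m` apart, so `a (j * m * N) w ≤ θ ^ j`. The rigid alternative is immediate from `a ≤ 1`.
-/

/-- `ℝ^d` normed by `ν`; a type synonym, so that this norm does not clash with the sup norm on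
`Fin d → ℝ`. -/
def NuSpace {d : ℕ} (_ν : (Fin d → ℝ) → ℝ) : Type := Fin d → ℝ

namespace NuSpace

variable {d : ℕ} (ν : (Fin d → ℝ) → ℝ)

instance : AddCommGroup (NuSpace ν) := inferInstanceAs (AddCommGroup (Fin d → ℝ))
instance : Module ℝ (NuSpace ν) := inferInstanceAs (Module ℝ (Fin d → ℝ))
instance : FiniteDimensional ℝ (NuSpace ν) := inferInstanceAs (FiniteDimensional ℝ (Fin d → ℝ))
instance : Norm (NuSpace ν) := ⟨ν⟩

variable {ν}

theorem normedSpaceCore (h0 : ∀ x, ν x = 0 ↔ x = 0) (hadd : ∀ x y, ν (x + y) ≤ ν x + ν y)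
    (hsmul : ∀ (c : ℝ) x, ν (c • x) = |c| * ν x) : NormedSpace.Core ℝ (NuSpace ν) where
  norm_nonneg (x : Fin d → ℝ) := by
    have h := hadd x ((-1 : ℝ) • x)
    rw [hsmul, abs_neg, abs_one, one_mul, neg_one_smul, add_neg_cancel, (h0 0).2 rfl] at h
    change 0 ≤ ν x
    linarith
  norm_smul := hsmul
  norm_triangle := hadd
  norm_eq_zero_iff := h0

variable [hν : Fact (NormedSpace.Core ℝ (NuSpace ν))]

noncomputable instance : NormedAddCommGroup (NuSpace ν) := .ofCore hν.out
noncomputable instance : NormedSpace ℝ (NuSpace ν) := .ofCore hν.out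

variable (ν) in
noncomputable def toCLM : Matrix (Fin d) (Fin d) ℝ →ₗ[ℝ] NuSpace ν →L[ℝ] NuSpace ν :=
  LinearMap.toContinuousLinearMap.toLinearMap ∘ₗ Matrix.toLin'.toLinearMap

theorem toCLM_mul (M N : Matrix (Fin d) (Fin d) ℝ) :
    toCLM ν (M * N) = (toCLM ν M).comp (toCLM ν N) := by
  ext x : 1
  exact (Matrix.mulVec_mulVec x M N).symm

theorem toCLM_one : toCLM ν (1 : Matrix (Fin d) (Fin d) ℝ) = ContinuousLinearMap.id ℝ _ := by
  ext x : 1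
  exact Matrix.one_mulVec x

theorem opNu_eq_norm_toCLM (M : Matrix (Fin d) (Fin d) ℝ) : opNu ν M = ‖toCLM ν M‖ := by
  rw [← ContinuousLinearMap.sSup_sphere_eq_norm]
  have hsphere : Metric.sphere (0 : NuSpace ν) 1 = {x | ν x = 1} := by
    ext x; exact mem_sphere_zero_iff_norm
  rw [hsphere]
  rfl

end NuSpace

section Consequences

variable {d : ℕ} {ν : (Fin d → ℝ) → ℝ} [Fact (NormedSpace.Core ℝ (NuSpace ν))]

open NuSpace

theorem opNu_nonneg (M : Matrix (Fin d) (Fin d) ℝ) : 0 ≤ opNu ν M := by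
  rw [opNu_eq_norm_toCLM]
  exact norm_nonneg _

theorem opNu_one_le : opNu ν (1 : Matrix (Fin d) (Fin d) ℝ) ≤ 1 := by
  rw [opNu_eq_norm_toCLM, toCLM_one]
  exact ContinuousLinearMap.norm_id_le

theorem opNu_mul_le (M N : Matrix (Fin d) (Fin d) ℝ) :
    opNu ν (M * N) ≤ opNu ν M * opNu ν N := by
  simp only [opNu_eq_norm_toCLM, toCLM_mul]
  exact ContinuousLinearMap.opNorm_comp_le _ _

theorem continuous_opNu : Continuous (opNu ν : Matrix (Fin d) (Fin d) ℝ → ℝ) := by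
  simp only [funext opNu_eq_norm_toCLM]
  exact continuous_norm.comp (toCLM ν).continuous_of_finiteDimensional

end Consequences

theorem coc_add {d : ℕ} {Ω : Type*} (T : Ω → Ω) (A : Ω → Matrix (Fin d) (Fin d) ℝ)
    (m n : ℕ) (u : Ω) : coc T A (m + n) u = coc T A n (T^[m] u) * coc T A m u := by
  induction n with
  | zero => simp [coc]
  | succ n ih =>
    rw [← add_assoc, coc, ih, coc, mul_assoc, ← Function.iterate_add_apply, add_comm n m]

theorem continuous_coc {d : ℕ} {Ω : Type*} [TopologicalSpace Ω] {T : Ω → Ω} (hT : Continuous T)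
    {A : Ω → Matrix (Fin d) (Fin d) ℝ} (hA : Continuous A) (n : ℕ) : Continuous (coc T A n) := by
  induction n with
  | zero => exact continuous_const
  | succ n ih => exact (hA.comp (hT.iterate n)).matrix_mul ih

theorem count_le_count_add_sub (P : ℕ → Prop) [DecidablePred P] {k n : ℕ} (hkn : k ≤ n) :
    Nat.count P n ≤ Nat.count P k + (n - k) := by
  obtain ⟨r, rfl⟩ := Nat.exists_eq_add_of_le hkn
  rw [Nat.count_add, Nat.add_sub_cancel_left]
  exact Nat.add_le_add_left (Nat.count_le _) _

theorem le_pow_of_mul_le_count {f : ℕ → ℝ} (hf : Antitone f) (hf0 : f 0 ≤ 1) {θ : ℝ}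
    (hθ : 0 ≤ θ) {P : ℕ → Prop} [DecidablePred P] {m : ℕ} (hm : 0 < m)
    (hP : ∀ p, P p → f (p + m) ≤ θ * f p) (j : ℕ) :
    ∀ n, j * m ≤ Nat.count P n → f n ≤ θ ^ j := by
  induction j with
  | zero => exact fun n _ => (hf (Nat.zero_le n)).trans (by simpa using hf0)
  | succ j ih =>
    intro n hn
    have hex : ∃ q, j * m < Nat.count P q := ⟨n, by nlinarith⟩
    obtain ⟨p, hp⟩ : ∃ p, Nat.find hex = p + 1 := Nat.exists_eq_succ_of_ne_zero fun h => by
      simpa [h] using Nat.find_spec hex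
    -- `p` is the `(j * m + 1)`-th point of `P`; the at least `m` points of `P` in `[p, n)`
    -- force `p + m ≤ n`.
    have hcount_succ : j * m < Nat.count P (p + 1) := hp ▸ Nat.find_spec hex
    have hcount : Nat.count P p ≤ j * m := not_lt.1 (Nat.find_min hex (by omega))
    have hPp : P p := Nat.count_lt_count_succ_iff.1 (by omega)
    have hpn : p + 1 ≤ n := hp ▸ Nat.find_min' hex (by nlinarith)
    have hgap : p + m ≤ n := by
      have := count_le_count_add_sub P hpn
      rw [Nat.count_succ, if_pos hPp] at this hcount_succ
      rw [add_one_mul] at hn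
      omega
    calc f n ≤ f (p + m) := hf hgap
      _ ≤ θ * f p := hP p hPp
      _ ≤ θ * θ ^ j := by
        refine mul_le_mul_of_nonneg_left (ih p ?_) hθ
        rw [Nat.count_succ, if_pos hPp] at hcount_succ
        omega
      _ = θ ^ (j + 1) := (pow_succ' θ j).symm

theorem exists_geometric_bound_of_le_pow_div {f : ℕ → ℝ} {θ : ℝ} (hθ0 : 0 < θ) (hθ1 : θ < 1)
    {q : ℕ} (hq : 0 < q) (hf : ∀ n, f n ≤ θ ^ (n / q)) :
    ∃ C : ℝ, 0 < C ∧ ∃ lam : ℝ, 0 < lam ∧ lam < 1 ∧ ∀ n, f n ≤ C * lam ^ n := by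
  have hq' : (0 : ℝ) < q := Nat.cast_pos.2 hq
  set lam := θ ^ (q : ℝ)⁻¹
  have hlam_pow : lam ^ q = θ := by
    rw [← Real.rpow_natCast, ← Real.rpow_mul hθ0.le, inv_mul_cancel₀ hq'.ne', Real.rpow_one]
  have hlam0 : 0 < lam := Real.rpow_pos_of_pos hθ0 _
  have hlam1 : lam < 1 := Real.rpow_lt_one hθ0.le hθ1 (inv_pos.2 hq')
  refine ⟨θ⁻¹, inv_pos.2 hθ0, lam, hlam0, hlam1, fun n => (hf n).trans ?_⟩
  have hn : n ≤ q * (n / q + 1) := (Nat.lt_mul_div_succ n hq).le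
  calc θ ^ (n / q) = θ⁻¹ * θ ^ (n / q + 1) := by rw [pow_succ', inv_mul_cancel_left₀ hθ0.ne']
    _ = θ⁻¹ * lam ^ (q * (n / q + 1)) := by rw [pow_mul, hlam_pow]
    _ ≤ θ⁻¹ * lam ^ n :=
      mul_le_mul_of_nonneg_left (pow_le_pow_of_le_one hlam0.le hlam1.le hn) (inv_nonneg.2 hθ0.le)

def IsWeaklyBirkhoffRecurrent {Ω : Type*} [PseudoMetricSpace Ω] (T : Ω → Ω) (w : Ω) : Prop :=
  ∀ ε : ℝ, 0 < ε → ∃ N : ℕ, 1 ≤ N ∧ ∀ j : ℕ,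
    j ≤ ((Finset.range (j * N)).filter (fun i => dist (T^[i] w) w < ε)).card

theorem exists_geometric_bound_of_submultiplicative {Ω : Type*} [PseudoMetricSpace Ω]
    {T : Ω → Ω} {a : ℕ → Ω → ℝ} (ha_mul : ∀ m n u, a (m + n) u ≤ a n (T^[m] u) * a m u)
    (ha_nonneg : ∀ n u, 0 ≤ a n u) (ha_le_one : ∀ n u, a n u ≤ 1) {w : Ω}
    (ha_usc : ∀ n, UpperSemicontinuousAt (a n) w) (hw : IsWeaklyBirkhoffRecurrent T w)
    {i n : ℕ} (hlt : a n (T^[i] w) < 1) :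
    ∃ C : ℝ, 0 < C ∧ ∃ lam : ℝ, 0 < lam ∧ lam < 1 ∧ ∀ k, a k w ≤ C * lam ^ k := by
  have hanti : Antitone (a · w) := by
    intro p q hpq
    obtain ⟨r, rfl⟩ := Nat.exists_eq_add_of_le hpq
    calc a (p + r) w ≤ a r (T^[p] w) * a p w := ha_mul p r w
      _ ≤ a p w := mul_le_of_le_one_left (ha_nonneg p w) (ha_le_one r _)
  set m := i + n + 1
  have hm : a m w < 1 :=
    calc a m w ≤ a (i + n) w := hanti (Nat.le_succ _)
      _ ≤ a n (T^[i] w) * a i w := ha_mul i n w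
      _ ≤ a n (T^[i] w) := mul_le_of_le_one_right (ha_nonneg _ _) (ha_le_one i w)
      _ < 1 := hlt
  obtain ⟨θ, hmθ, hθ1⟩ := exists_between hm
  have hθ0 : 0 < θ := (ha_nonneg m w).trans_lt hmθ
  obtain ⟨ε, hε, hball⟩ := Metric.eventually_nhds_iff.1 (ha_usc m θ hmθ)
  obtain ⟨N, hN, hcount⟩ := hw ε hε
  have hreturn : ∀ p, dist (T^[p] w) w < ε → a (p + m) w ≤ θ * a p w := fun p hp =>
    calc a (p + m) w ≤ a m (T^[p] w) * a p w := ha_mul p m w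
      _ ≤ θ * a p w := mul_le_mul_of_nonneg_right (hball hp).le (ha_nonneg p w)
  refine exists_geometric_bound_of_le_pow_div hθ0 hθ1 (q := m * N) (by positivity) fun k => ?_
  calc a k w ≤ a (k / (m * N) * m * N) w :=
        hanti (by rw [mul_assoc]; exact Nat.div_mul_le_self k _)
    _ ≤ θ ^ (k / (m * N)) := le_pow_of_mul_le_count hanti (ha_le_one 0 w) hθ0.le (by omega)
        hreturn _ _ (by rw [Nat.count_eq_card_filter_range]; exact hcount _)

open Classical in
theorem stmt13_general {d : ℕ} {Ω : Type*} [MetricSpace Ω]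
    (T : Ω → Ω) (hT : Continuous T)
    (A : Ω → Matrix (Fin d) (Fin d) ℝ) (hA : Continuous A)
    (ν : (Fin d → ℝ) → ℝ)
    (h0 : ∀ x, ν x = 0 ↔ x = 0)
    (hadd : ∀ x y, ν (x + y) ≤ ν x + ν y)
    (hsmul : ∀ (c : ℝ) x, ν (c • x) = |c| * ν x)
    (hbound : ∀ n : ℕ, 1 ≤ n → ∀ w : Ω, opNu ν (coc T A n w) ≤ 1)
    (w : Ω)
    (hwbr : ∀ ε : ℝ, 0 < ε → ∃ Nε : ℕ, 1 ≤ Nε ∧ ∀ j : ℕ,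
      j ≤ ((Finset.range (j * Nε)).filter (fun i => dist (T^[i] w) w < ε)).card) :
    ((∃ i : ℕ, ∃ n : ℕ, 1 ≤ n ∧ opNu ν (coc T A n (T^[i] w)) < 1) →
      ∃ C : ℝ, 0 < C ∧ ∃ lam : ℝ, 0 < lam ∧ lam < 1 ∧
        ∀ n : ℕ, opNu ν (coc T A n w) ≤ C * lam ^ n) ∧
    ((¬ ∃ i : ℕ, ∃ n : ℕ, 1 ≤ n ∧ opNu ν (coc T A n (T^[i] w)) < 1) →
      ∀ i : ℕ, ∀ n : ℕ, 1 ≤ n → opNu ν (coc T A n (T^[i] w)) = 1) := by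
  refine ⟨fun ⟨i, n, _, hlt⟩ => ?_, fun hrigid i n hn => ?_⟩
  · have : Fact (NormedSpace.Core ℝ (NuSpace ν)) := ⟨NuSpace.normedSpaceCore h0 hadd hsmul⟩
    have hle_one : ∀ n u, opNu ν (coc T A n u) ≤ 1
      | 0, _ => opNu_one_le
      | n + 1, u => hbound (n + 1) n.succ_pos u
    exact exists_geometric_bound_of_submultiplicative
      (fun m n u => (coc_add T A m n u).symm ▸ opNu_mul_le _ _) (fun _ _ => opNu_nonneg _)
      hle_one
      (fun n => (continuous_opNu.comp (continuous_coc hT hA n)).continuousAt.upperSemicontinuousAt)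
      hwbr hlt
  · exact le_antisymm (hbound n hn _) (not_lt.1 fun h => hrigid ⟨i, n, hn, h⟩)

open Classical in
theorem stmt13 {d : ℕ} {Ω : Type*} [MetricSpace Ω] [TopologicalSpace.SeparableSpace Ω]
    (T : Ω → Ω) (hT : Continuous T)
    (A : Ω → Matrix (Fin d) (Fin d) ℝ) (hA : Continuous A)
    (ν : (Fin d → ℝ) → ℝ)
    (h0 : ∀ x, ν x = 0 ↔ x = 0)
    (hadd : ∀ x y, ν (x + y) ≤ ν x + ν y)
    (hsmul : ∀ (c : ℝ) x, ν (c • x) = |c| * ν x)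
    (hbound : ∀ n : ℕ, 1 ≤ n → ∀ w : Ω, opNu ν (coc T A n w) ≤ 1)
    (w : Ω)
    (hwbr : ∀ ε : ℝ, 0 < ε → ∃ Nε : ℕ, 1 ≤ Nε ∧ ∀ j : ℕ,
      j ≤ ((Finset.range (j * Nε)).filter (fun i => dist (T^[i] w) w < ε)).card) :
    ((∃ i : ℕ, ∃ n : ℕ, 1 ≤ n ∧ opNu ν (coc T A n (T^[i] w)) < 1) →
      ∃ C : ℝ, 0 < C ∧ ∃ lam : ℝ, 0 < lam ∧ lam < 1 ∧
        ∀ n : ℕ, opNu ν (coc T A n w) ≤ C * lam ^ n) ∧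
    ((¬ ∃ i : ℕ, ∃ n : ℕ, 1 ≤ n ∧ opNu ν (coc T A n (T^[i] w)) < 1) →
      ∀ i : ℕ, ∀ n : ℕ, 1 ≤ n → opNu ν (coc T A n (T^[i] w)) = 1) :=
  stmt13_general T hT A hA ν h0 hadd hsmul hbound w hwbr
end

section
/- Let S₁, S₂ ∈ ℝ^{2×2} satisfy the weak Lyapunov condition P - S_kᵀPS_k ≥ 0 (k = 1,2) for a common symmetric positive-definite P. Then the system {S₁,S₂} is absolutely stable (‖S_{σ(n)}⋯S_{σ(1)}‖ → 0 for every switching signal σ : ℕ → {1,2}) if and only if ρ(S₁) < 1, ρ(S₂) < 1, and ρ(S₁S₂) < 1. -/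
open Matrix Filter
open scoped ENNReal

/-!
Write `‖x‖_P = √(xᵀPx)` and `Q_k = P - S_kᵀ P S_k ⪰ 0`: each `S_k` is a weak contraction for
`‖·‖_P`, and `‖S_k x‖_P = ‖x‖_P` forces `Q_k x = 0`. By Gelfand's formula `ρ(A) < 1` iff
`Aⁿ → 0`, which settles the forward direction on constant and alternating signals.

Conversely, `ρ(S_k) < 1` rules out `Q_k = 0` (else `S_k` would be a `P`-isometry), so in
dimension 2 the kernel of `Q_k` is a line. If `S_c S_b S_a` preserved `‖x‖_P` for some `x ≠ 0`,
then `x`, `S_a x`, `S_b S_a x` would lie in the kernels of `Q_a`, `Q_b`, `Q_c`. Since two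
consecutive letters coincide or `a = c`, one of `S_a`, `S_b`, `S_b S_a` maps a vector of such a
line to a vector of the same line and the same `P`-norm, i.e. has eigenvalue `±1`, contradicting
`ρ < 1` (note `ρ(S₁S₀) = ρ(S₀S₁)`). So all products of length 3 are strict contractions, hence
uniformly so (compact sphere, finitely many products), and the switched products decay
geometrically.
-/

open Topology

section SpectralRadius

attribute [local instance] Matrix.linftyOpNormedRing Matrix.linftyOpNormedAlgebra

variable {d : ℕ}

lemma spectralRadius_lt_one_of_tendsto_pow {A : Matrix (Fin d) (Fin d) ℂ}
    (h : Tendsto (fun n => A ^ n) atTop (𝓝 0)) : spectralRadius ℂ A < 1 := by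
  have hnorm : Tendsto (fun n => ‖A ^ (n + 1)‖₊) atTop (𝓝 0) := by
    simpa using (h.comp (tendsto_add_atTop_nat 1)).nnnorm
  obtain ⟨n, hn⟩ := (hnorm.eventually_lt_const one_pos).exists
  have hone : ‖(1 : Matrix (Fin d) (Fin d) ℂ)‖₊ ≤ 1 := by
    rcases isEmpty_or_nonempty (Fin d) with _ | _
    · simp [Subsingleton.elim (1 : Matrix (Fin d) (Fin d) ℂ) 0]
    · simp
  have hexp : (0 : ℝ) < 1 / (n + 1) := by positivity
  calc spectralRadius ℂ A
      ≤ (‖A ^ (n + 1)‖₊ : ℝ≥0∞) ^ (1 / (n + 1) : ℝ) *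
          (‖(1 : Matrix (Fin d) (Fin d) ℂ)‖₊ : ℝ≥0∞) ^ (1 / (n + 1) : ℝ) :=
        spectrum.spectralRadius_le_pow_nnnorm_pow_one_div ℂ A n
    _ ≤ (‖A ^ (n + 1)‖₊ : ℝ≥0∞) ^ (1 / (n + 1) : ℝ) :=
        mul_le_of_le_one_right' (ENNReal.rpow_le_one (by exact_mod_cast hone) hexp.le)
    _ < 1 := ENNReal.rpow_lt_one (by exact_mod_cast hn) hexp

lemma tendsto_pow_of_spectralRadius_lt_one {A : Matrix (Fin d) (Fin d) ℂ}
    (h : spectralRadius ℂ A < 1) : Tendsto (fun n => A ^ n) atTop (𝓝 0) := by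
  obtain ⟨r, hAr, hr1⟩ := ENNReal.lt_iff_exists_nnreal_btwn.1 h
  have hev : ∀ᶠ n : ℕ in atTop, ‖A ^ n‖₊ ≤ r ^ n := by
    filter_upwards [(spectrum.pow_nnnorm_pow_one_div_tendsto_nhds_spectralRadius A).eventually
      (gt_mem_nhds hAr), eventually_ne_atTop 0] with n hn hn0
    have := ENNReal.pow_le_pow_left (n := n) hn.le
    rwa [← ENNReal.rpow_natCast, ← ENNReal.rpow_mul, one_div_mul_cancel (by exact_mod_cast hn0),
      ENNReal.rpow_one, ← ENNReal.coe_pow, ENNReal.coe_le_coe] at this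
  refine squeeze_zero_norm' ?_
    (tendsto_pow_atTop_nhds_zero_of_lt_one r.coe_nonneg (by exact_mod_cast hr1))
  filter_upwards [hev] with n hn
  exact_mod_cast hn

lemma map_ofReal_pow (A : Matrix (Fin d) (Fin d) ℝ) (n : ℕ) :
    (A ^ n).map Complex.ofReal = A.map Complex.ofReal ^ n :=
  map_pow Complex.ofRealHom.mapMatrix A n

lemma tendsto_pow_map_ofReal_iff (A : Matrix (Fin d) (Fin d) ℝ) :
    Tendsto (fun n => A.map Complex.ofReal ^ n) atTop (𝓝 0) ↔
      Tendsto (fun n => A ^ n) atTop (𝓝 0) := by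
  have hemb := Complex.isometry_ofReal.isEmbedding.matrix_map (m := Fin d) (n := Fin d)
  simp only [← map_ofReal_pow]
  rw [hemb.tendsto_nhds_iff]
  simp [Function.comp_def]

theorem specRad_lt_one_iff_tendsto_pow (A : Matrix (Fin d) (Fin d) ℝ) :
    specRad A < 1 ↔ Tendsto (fun n => A ^ n) atTop (𝓝 0) :=
  ⟨fun h => (tendsto_pow_map_ofReal_iff A).1 (tendsto_pow_of_spectralRadius_lt_one h),
    fun h => spectralRadius_lt_one_of_tendsto_pow ((tendsto_pow_map_ofReal_iff A).2 h)⟩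

end SpectralRadius

section PNorm

variable {d : ℕ} {P S : Matrix (Fin d) (Fin d) ℝ}

lemma continuous_Pnorm (P : Matrix (Fin d) (Fin d) ℝ) : Continuous (Pnorm P) :=
  Real.continuous_sqrt.comp <|
    continuous_id.dotProduct (continuous_const.matrix_mulVec continuous_id)

@[simp]
lemma Pnorm_zero : Pnorm P 0 = 0 := by simp [Pnorm]

lemma Pnorm_smul (t : ℝ) (x : Fin d → ℝ) : Pnorm P (t • x) = |t| * Pnorm P x := by
  simp only [Pnorm]
  rw [mulVec_smul, smul_dotProduct, dotProduct_smul, smul_eq_mul, smul_eq_mul,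
    ← mul_assoc, ← sq, Real.sqrt_mul (sq_nonneg t), Real.sqrt_sq_eq_abs]

lemma Pnorm_smul_of_pos {t : ℝ} (ht : 0 < t) (x : Fin d → ℝ) : Pnorm P (t • x) = t * Pnorm P x := by
  rw [Pnorm_smul, abs_of_pos ht]

lemma Pnorm_pos (hP : P.PosDef) {x : Fin d → ℝ} (hx : x ≠ 0) : 0 < Pnorm P x :=
  Real.sqrt_pos.2 (by simpa using hP.dotProduct_mulVec_pos hx)

lemma dotProduct_mulVec_mulVec (S : Matrix (Fin d) (Fin d) ℝ) (x : Fin d → ℝ) :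
    (S *ᵥ x) ⬝ᵥ P *ᵥ (S *ᵥ x) = x ⬝ᵥ (Sᵀ * P * S) *ᵥ x := by
  rw [← mulVec_mulVec, ← mulVec_mulVec, dotProduct_mulVec x Sᵀ, vecMul_transpose]

lemma Pnorm_mulVec_le (hL : (P - Sᵀ * P * S).PosSemidef) (x : Fin d → ℝ) :
    Pnorm P (S *ᵥ x) ≤ Pnorm P x := by
  have := hL.dotProduct_mulVec_nonneg x
  simp only [star_trivial, sub_mulVec, dotProduct_sub, sub_nonneg] at this
  exact Real.sqrt_le_sqrt (by rwa [dotProduct_mulVec_mulVec])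

lemma sub_mulVec_eq_zero_of_Pnorm_mulVec_eq (hP : P.PosSemidef)
    (hL : (P - Sᵀ * P * S).PosSemidef) {x : Fin d → ℝ} (h : Pnorm P (S *ᵥ x) = Pnorm P x) :
    (P - Sᵀ * P * S) *ᵥ x = 0 := by
  have hq : x ⬝ᵥ (Sᵀ * P * S) *ᵥ x = x ⬝ᵥ P *ᵥ x := by
    rw [← dotProduct_mulVec_mulVec]
    refine (Real.sqrt_inj ?_ ?_).1 h
    · simpa using hP.dotProduct_mulVec_nonneg (S *ᵥ x)
    · simpa using hP.dotProduct_mulVec_nonneg x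
  refine (hL.dotProduct_mulVec_zero_iff x).1 ?_
  rw [star_trivial, sub_mulVec, dotProduct_sub, hq, sub_self]

end PNorm

section Homogeneous

variable {E : Type*} [NormedAddCommGroup E] [NormedSpace ℝ E]

lemma map_zero_of_homogeneous {f : E → ℝ} (hf : ∀ t : ℝ, 0 < t → ∀ x, f (t • x) = t * f x) :
    f 0 = 0 := by
  have := hf 2 two_pos 0
  rw [smul_zero] at this
  linarith

lemma exists_forall_mul_le_mul_of_homogeneous [ProperSpace E] [Nontrivial E] {f g : E → ℝ}
    (hf : Continuous f) (hg : Continuous g)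
    (hfh : ∀ t : ℝ, 0 < t → ∀ x, f (t • x) = t * f x)
    (hgh : ∀ t : ℝ, 0 < t → ∀ x, g (t • x) = t * g x) (hg0 : ∀ x ≠ 0, 0 < g x) :
    ∃ x₀ ≠ 0, ∀ x, f x * g x₀ ≤ f x₀ * g x := by
  have hsphere : ∀ x ∈ Metric.sphere (0 : E) 1, x ≠ 0 := fun x hx h => by simp [h] at hx
  obtain ⟨x₀, hx₀, hmax⟩ := (isCompact_sphere (0 : E) 1).exists_isMaxOn
    (NormedSpace.sphere_nonempty.2 zero_le_one)
    (hf.continuousOn.div hg.continuousOn fun x hx => (hg0 x (hsphere x hx)).ne')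
  refine ⟨x₀, hsphere x₀ hx₀, fun x => ?_⟩
  rcases eq_or_ne x 0 with rfl | hx
  · simp [map_zero_of_homogeneous hfh, map_zero_of_homogeneous hgh]
  have hr : 0 < ‖x‖⁻¹ := inv_pos.2 (norm_pos_iff.2 hx)
  have hu : ‖x‖⁻¹ • x ∈ Metric.sphere (0 : E) 1 := by
    simp [norm_smul, inv_mul_cancel₀ (norm_ne_zero_iff.2 hx)]
  have hle : f x / g x ≤ f x₀ / g x₀ := by
    simpa [hfh _ hr, hgh _ hr, mul_div_mul_left _ _ hr.ne'] using hmax hu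
  rwa [div_le_div_iff₀ (hg0 x hx) (hg0 x₀ (hsphere x₀ hx₀))] at hle

end Homogeneous

section Contraction

variable {d : ℕ} [NeZero d] {P : Matrix (Fin d) (Fin d) ℝ}

lemma exists_norm_le_mul_Pnorm (hP : P.PosDef) : ∃ C : ℝ, ∀ x, ‖x‖ ≤ C * Pnorm P x := by
  obtain ⟨x₀, hx₀, h⟩ :=
    exists_forall_mul_le_mul_of_homogeneous continuous_norm (continuous_Pnorm P)
    (fun t ht x => by rw [norm_smul, Real.norm_of_nonneg ht.le])
    (fun t ht x => Pnorm_smul_of_pos ht x) (fun x hx => Pnorm_pos hP hx)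
  refine ⟨‖x₀‖ / Pnorm P x₀, fun x => ?_⟩
  rw [div_mul_eq_mul_div, le_div_iff₀ (Pnorm_pos hP hx₀)]
  exact h x

lemma exists_Pnorm_mulVec_le_mul (hP : P.PosDef) {W : Matrix (Fin d) (Fin d) ℝ}
    (hW : ∀ x ≠ 0, Pnorm P (W *ᵥ x) < Pnorm P x) :
    ∃ c, 0 ≤ c ∧ c < 1 ∧ ∀ x, Pnorm P (W *ᵥ x) ≤ c * Pnorm P x := by
  obtain ⟨x₀, hx₀, h⟩ := exists_forall_mul_le_mul_of_homogeneous
    (f := fun x => Pnorm P (W *ᵥ x)) ((continuous_Pnorm P).comp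
    (continuous_const.matrix_mulVec continuous_id)) (continuous_Pnorm P)
    (fun t ht x => by rw [mulVec_smul, Pnorm_smul_of_pos ht])
    (fun t ht x => Pnorm_smul_of_pos ht x) (fun x hx => Pnorm_pos hP hx)
  have hpos := Pnorm_pos hP hx₀
  refine ⟨Pnorm P (W *ᵥ x₀) / Pnorm P x₀, div_nonneg (Real.sqrt_nonneg _) hpos.le,
    (div_lt_one hpos).2 (hW x₀ hx₀), fun x => ?_⟩
  rw [div_mul_eq_mul_div, le_div_iff₀ hpos]
  exact h x

lemma exists_forall_Pnorm_mulVec_le_mul (hP : P.PosDef) {𝒲 : Set (Matrix (Fin d) (Fin d) ℝ)}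
    (h𝒲 : 𝒲.Finite) (hW : ∀ W ∈ 𝒲, ∀ x ≠ 0, Pnorm P (W *ᵥ x) < Pnorm P x) :
    ∃ c, 0 ≤ c ∧ c < 1 ∧ ∀ W ∈ 𝒲, ∀ x, Pnorm P (W *ᵥ x) ≤ c * Pnorm P x := by
  induction 𝒲, h𝒲 using Set.Finite.induction_on with
  | empty => exact ⟨0, le_rfl, zero_lt_one, by simp⟩
  | @insert W 𝒲 _ _ ih =>
    obtain ⟨c, hc0, hc1, hc⟩ := ih fun V hV => hW V (Set.mem_insert_of_mem W hV)
    obtain ⟨c', -, hc'1, hc'⟩ := exists_Pnorm_mulVec_le_mul hP (hW W (Set.mem_insert W 𝒲))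
    refine ⟨max c c', le_max_of_le_left hc0, max_lt hc1 hc'1, ?_⟩
    rintro V (rfl | hV) x
    · exact (hc' x).trans (mul_le_mul_of_nonneg_right (le_max_right c c') (Real.sqrt_nonneg _))
    · exact (hc V hV x).trans (mul_le_mul_of_nonneg_right (le_max_left c c') (Real.sqrt_nonneg _))

lemma tendsto_zero_of_tendsto_Pnorm_mulVec (hP : P.PosDef) {M : ℕ → Matrix (Fin d) (Fin d) ℝ}
    (hM : ∀ x, Tendsto (fun n => Pnorm P (M n *ᵥ x)) atTop (𝓝 0)) : Tendsto M atTop (𝓝 0) := by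
  obtain ⟨C, hC⟩ := exists_norm_le_mul_Pnorm hP
  have hcol : ∀ j, Tendsto (fun n => M n *ᵥ Pi.single j 1) atTop (𝓝 0) := fun j =>
    squeeze_zero_norm (fun n => hC _) (by simpa using (hM (Pi.single j 1)).const_mul C)
  refine tendsto_pi_nhds.2 fun i => tendsto_pi_nhds.2 fun j => ?_
  simpa [mulVec_single_one] using (tendsto_pi_nhds.1 (hcol j)) i

end Contraction

section Products

variable {d K : ℕ} (S : Fin K → Matrix (Fin d) (Fin d) ℝ)

lemma prodsW_add (σ : ℕ → Fin K) (n m : ℕ) :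
    prodsW S σ (n + m) = prodsW S (fun i => σ (n + i)) m * prodsW S σ n := by
  induction m with
  | zero => simp [prodsW]
  | succ m ih => rw [← add_assoc, prodsW, ih, prodsW, mul_assoc]

lemma finite_range_prodsW (m : ℕ) : (Set.range fun σ => prodsW S σ m).Finite := by
  induction m with
  | zero => exact (Set.finite_singleton 1).subset (Set.range_const_subset)
  | succ m ih =>
    refine ((Set.finite_range S).image2 (· * ·) ih).subset ?_
    rintro _ ⟨σ, rfl⟩
    exact ⟨S (σ m), ⟨σ m, rfl⟩, prodsW S σ m, ⟨σ, rfl⟩, rfl⟩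

lemma prodsW_mul_of_periodic {σ : ℕ → Fin K} {m : ℕ} (hσ : Function.Periodic σ m) (q : ℕ) :
    prodsW S σ (m * q) = prodsW S σ m ^ q := by
  induction q with
  | zero => rfl
  | succ q ih =>
    have hshift : (fun i => σ (m * q + i)) = σ := funext fun i => by
      rw [add_comm, mul_comm]; exact_mod_cast (hσ.nat_mul q) i
    rw [Nat.mul_succ, prodsW_add, hshift, ih, pow_succ']

lemma tendsto_pow_of_periodic {σ : ℕ → Fin K} {m : ℕ} (hσ : Function.Periodic σ m) (hm : 0 < m)
    (h : Tendsto (prodsW S σ) atTop (𝓝 0)) :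
    Tendsto (fun q => prodsW S σ m ^ q) atTop (𝓝 0) := by
  simpa only [Function.comp_def, id, prodsW_mul_of_periodic S hσ] using
    h.comp (tendsto_id.const_mul_atTop' hm)

variable {S} {P : Matrix (Fin d) (Fin d) ℝ}

lemma Pnorm_prodsW_mulVec_le (hL : ∀ k, (P - (S k)ᵀ * P * S k).PosSemidef) (σ : ℕ → Fin K)
    (n : ℕ) (x : Fin d → ℝ) : Pnorm P (prodsW S σ n *ᵥ x) ≤ Pnorm P x := by
  induction n with
  | zero => simp [prodsW]
  | succ n ih =>
    rw [prodsW, ← mulVec_mulVec]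
    exact (Pnorm_mulVec_le (hL (σ n)) _).trans ih

end Products

section Stability

variable {d K : ℕ} {S : Fin K → Matrix (Fin d) (Fin d) ℝ} {P : Matrix (Fin d) (Fin d) ℝ}

lemma Pnorm_prodsW_mulVec_le_pow (hL : ∀ k, (P - (S k)ᵀ * P * S k).PosSemidef) {m : ℕ} {c : ℝ}
    (hc0 : 0 ≤ c) (hc : ∀ τ x, Pnorm P (prodsW S τ m *ᵥ x) ≤ c * Pnorm P x) (σ : ℕ → Fin K)
    (n : ℕ) (x : Fin d → ℝ) : Pnorm P (prodsW S σ n *ᵥ x) ≤ c ^ (n / m) * Pnorm P x := by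
  have hblocks : ∀ q x, Pnorm P (prodsW S σ (m * q) *ᵥ x) ≤ c ^ q * Pnorm P x := by
    intro q
    induction q with
    | zero => simp [prodsW]
    | succ q ih =>
      intro x
      rw [Nat.mul_succ, prodsW_add, ← mulVec_mulVec, pow_succ', mul_assoc]
      exact (hc _ _).trans (mul_le_mul_of_nonneg_left (ih x) hc0)
  calc Pnorm P (prodsW S σ n *ᵥ x)
      = Pnorm P (prodsW S _ (n % m) *ᵥ (prodsW S σ (m * (n / m)) *ᵥ x)) := by
        rw [mulVec_mulVec, ← prodsW_add, Nat.div_add_mod]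
    _ ≤ Pnorm P (prodsW S σ (m * (n / m)) *ᵥ x) := Pnorm_prodsW_mulVec_le hL _ _ _
    _ ≤ c ^ (n / m) * Pnorm P x := hblocks _ x

theorem tendsto_prodsW_of_Pnorm_prodsW_lt [NeZero d] (hP : P.PosDef)
    (hL : ∀ k, (P - (S k)ᵀ * P * S k).PosSemidef) {m : ℕ} (hm : 0 < m)
    (hstrict : ∀ τ, ∀ x ≠ 0, Pnorm P (prodsW S τ m *ᵥ x) < Pnorm P x) (σ : ℕ → Fin K) :
    Tendsto (prodsW S σ) atTop (𝓝 0) := by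
  obtain ⟨c, hc0, hc1, hc⟩ := exists_forall_Pnorm_mulVec_le_mul hP (finite_range_prodsW S m)
    (by rintro _ ⟨τ, rfl⟩; exact hstrict τ)
  have hpow : Tendsto (fun n => c ^ (n / m)) atTop (𝓝 0) :=
    (tendsto_pow_atTop_nhds_zero_of_lt_one hc0 hc1).comp (Nat.tendsto_div_const_atTop hm.ne')
  refine tendsto_zero_of_tendsto_Pnorm_mulVec hP fun x => ?_
  refine squeeze_zero (fun n => Real.sqrt_nonneg _) (fun n => ?_)
    (by simpa using hpow.mul_const (Pnorm P x))
  exact Pnorm_prodsW_mulVec_le_pow hL hc0 (fun τ => hc _ ⟨τ, rfl⟩) σ n x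

end Stability

section Powers

variable {d : ℕ} {A B : Matrix (Fin d) (Fin d) ℝ}

lemma tendsto_pow_mulVec (h : Tendsto (fun n => A ^ n) atTop (𝓝 0)) (x : Fin d → ℝ) :
    Tendsto (fun n => A ^ n *ᵥ x) atTop (𝓝 0) := by
  simpa [Function.comp_def] using ((continuous_id.matrix_mulVec continuous_const).tendsto 0).comp h

lemma not_tendsto_pow_of_mulVec_eq_smul {t : ℝ} (ht : |t| = 1) {x : Fin d → ℝ} (hx : x ≠ 0)
    (hAx : A *ᵥ x = t • x) : ¬Tendsto (fun n => A ^ n) atTop (𝓝 0) := by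
  intro h
  have hpow : ∀ n, A ^ n *ᵥ x = t ^ n • x := by
    intro n
    induction n with
    | zero => simp
    | succ n ih => rw [pow_succ, ← mulVec_mulVec, hAx, mulVec_smul, ih, smul_smul, ← pow_succ']
  have hnorm : Tendsto (fun n => ‖A ^ n *ᵥ x‖) atTop (𝓝 ‖x‖) := by
    simp [hpow, norm_smul, ht]
  have hzero : Tendsto (fun n => ‖A ^ n *ᵥ x‖) atTop (𝓝 0) := by
    simpa using (tendsto_pow_mulVec h x).norm
  exact hx (norm_eq_zero.1 (tendsto_nhds_unique hnorm hzero))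

lemma sub_ne_zero_of_tendsto_pow [NeZero d] {P : Matrix (Fin d) (Fin d) ℝ} (hP : P.PosDef)
    (h : Tendsto (fun n => A ^ n) atTop (𝓝 0)) : P - Aᵀ * P * A ≠ 0 := by
  intro hiso
  have hpow : ∀ n x, Pnorm P (A ^ n *ᵥ x) = Pnorm P x := by
    intro n
    induction n with
    | zero => simp
    | succ n ih =>
      intro x
      rw [pow_succ', ← mulVec_mulVec, Pnorm, dotProduct_mulVec_mulVec, ← sub_eq_zero.1 hiso]
      exact ih x
  obtain ⟨x, hx⟩ := exists_ne (0 : Fin d → ℝ)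
  have hlim := ((continuous_Pnorm P).tendsto 0).comp (tendsto_pow_mulVec h x)
  simp only [Function.comp_def, hpow, Pnorm_zero, tendsto_const_nhds_iff] at hlim
  exact (Pnorm_pos hP hx).ne' hlim

lemma tendsto_pow_mul_comm (h : Tendsto (fun n => (A * B) ^ n) atTop (𝓝 0)) :
    Tendsto (fun n => (B * A) ^ n) atTop (𝓝 0) := by
  have hshift : ∀ n, (B * A) ^ (n + 1) = B * (A * B) ^ n * A := fun n => by
    rw [pow_succ, ← mul_assoc, mul_pow_mul]
  have hcont : Continuous fun M : Matrix (Fin d) (Fin d) ℝ => B * M * A := by fun_prop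
  rw [← tendsto_add_atTop_iff_nat 1]
  simpa [Function.comp_def, hshift] using (hcont.tendsto 0).comp h

end Powers

lemma exists_smul_eq_of_mulVec_eq_zero {𝕜 : Type*} [Field 𝕜] {Q : Matrix (Fin 2) (Fin 2) 𝕜}
    (hQ : Q ≠ 0) {x z : Fin 2 → 𝕜} (hx : x ≠ 0) (hQx : Q *ᵥ x = 0) (hQz : Q *ᵥ z = 0) :
    ∃ t : 𝕜, z = t • x := by
  set f := Matrix.toLin' Q
  have hx' : (⟨x, hQx⟩ : LinearMap.ker f) ≠ 0 := fun h => hx (congrArg Subtype.val h)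
  have hrange : 0 < Module.finrank 𝕜 (LinearMap.range f) := by
    rw [Module.finrank_pos_iff, Submodule.nontrivial_iff_ne_bot, Ne, LinearMap.range_eq_bot]
    simpa [f] using hQ
  have hker : 0 < Module.finrank 𝕜 (LinearMap.ker f) :=
    Module.finrank_pos_iff_exists_ne_zero.2 ⟨_, hx'⟩
  have hdim := f.finrank_range_add_finrank_ker
  rw [Module.finrank_fin_fun] at hdim
  obtain ⟨t, ht⟩ := (finrank_eq_one_iff_of_nonzero' _ hx').1
    (show Module.finrank 𝕜 (LinearMap.ker f) = 1 by omega) ⟨z, hQz⟩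
  exact ⟨t, congrArg Subtype.val ht.symm⟩

section TwoByTwo

variable {P : Matrix (Fin 2) (Fin 2) ℝ}

lemma Pnorm_mulVec_ne_of_mulVec_eq_zero (hP : P.PosDef) {Q M : Matrix (Fin 2) (Fin 2) ℝ}
    (hQ : Q ≠ 0) (hM : Tendsto (fun n => M ^ n) atTop (𝓝 0)) {u : Fin 2 → ℝ} (hu : u ≠ 0)
    (hQu : Q *ᵥ u = 0) (hQMu : Q *ᵥ (M *ᵥ u) = 0) : Pnorm P (M *ᵥ u) ≠ Pnorm P u := by
  intro he
  obtain ⟨t, ht⟩ := exists_smul_eq_of_mulVec_eq_zero hQ hu hQu hQMu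
  rw [ht, Pnorm_smul, mul_eq_right₀ (Pnorm_pos hP hu).ne'] at he
  exact not_tendsto_pow_of_mulVec_eq_smul he hu ht hM

variable {S : Fin 2 → Matrix (Fin 2) (Fin 2) ℝ}

lemma Pnorm_mulVec_mulVec_mulVec_lt (hP : P.PosDef)
    (hL : ∀ k, (P - (S k)ᵀ * P * S k).PosSemidef)
    (hS : ∀ k, Tendsto (fun n => S k ^ n) atTop (𝓝 0))
    (hSS : ∀ a b, a ≠ b → Tendsto (fun n => (S a * S b) ^ n) atTop (𝓝 0))
    (a b c : Fin 2) {x : Fin 2 → ℝ} (hx : x ≠ 0) :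
    Pnorm P (S c *ᵥ (S b *ᵥ (S a *ᵥ x))) < Pnorm P x := by
  set y := S a *ᵥ x
  set z := S b *ᵥ y
  have hQ k := sub_ne_zero_of_tendsto_pow hP (hS k)
  have l1 := Pnorm_mulVec_le (hL a) x
  have l2 := Pnorm_mulVec_le (hL b) y
  have l3 := Pnorm_mulVec_le (hL c) z
  refine lt_of_le_of_ne (l3.trans (l2.trans l1)) fun heq => ?_
  have e1 : Pnorm P y = Pnorm P x := by linarith
  have e2 : Pnorm P z = Pnorm P y := by linarith
  have e3 : Pnorm P (S c *ᵥ z) = Pnorm P z := by linarith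
  have k1 := sub_mulVec_eq_zero_of_Pnorm_mulVec_eq hP.posSemidef (hL a) e1
  have k2 := sub_mulVec_eq_zero_of_Pnorm_mulVec_eq hP.posSemidef (hL b) e2
  have k3 := sub_mulVec_eq_zero_of_Pnorm_mulVec_eq hP.posSemidef (hL c) e3
  have hy : y ≠ 0 := fun h => (Pnorm_pos hP hx).ne' (by rw [← e1, h, Pnorm_zero])
  by_cases hab : a = b
  · subst hab
    exact Pnorm_mulVec_ne_of_mulVec_eq_zero hP (hQ a) (hS a) hx k1 k2 e1
  by_cases hbc : b = c
  · subst hbc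
    exact Pnorm_mulVec_ne_of_mulVec_eq_zero hP (hQ b) (hS b) hy k2 k3 e2
  obtain rfl : c = a := by omega
  have hz : z = (S b * S c) *ᵥ x := mulVec_mulVec _ _ _
  rw [hz] at k3 e2
  exact Pnorm_mulVec_ne_of_mulVec_eq_zero hP (hQ c) (hSS b c hbc) hx k1 k3 (e2.trans e1)

theorem tendsto_prodsW_of_tendsto_pow (hP : P.PosDef)
    (hL : ∀ k, (P - (S k)ᵀ * P * S k).PosSemidef)
    (h0 : Tendsto (fun n => S 0 ^ n) atTop (𝓝 0)) (h1 : Tendsto (fun n => S 1 ^ n) atTop (𝓝 0))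
    (h01 : Tendsto (fun n => (S 0 * S 1) ^ n) atTop (𝓝 0)) (σ : ℕ → Fin 2) :
    Tendsto (prodsW S σ) atTop (𝓝 0) := by
  have hS : ∀ k, Tendsto (fun n => S k ^ n) atTop (𝓝 0) := Fin.forall_fin_two.2 ⟨h0, h1⟩
  have hSS : ∀ a b, a ≠ b → Tendsto (fun n => (S a * S b) ^ n) atTop (𝓝 0) := by
    simp only [Fin.forall_fin_two, ne_eq, not_true_eq_false, IsEmpty.forall_iff, true_and,
      and_true]
    exact ⟨fun _ => h01, fun _ => tendsto_pow_mul_comm h01⟩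
  refine tendsto_prodsW_of_Pnorm_prodsW_lt hP hL three_pos (fun τ x hx => ?_) σ
  simpa [prodsW, ← mulVec_mulVec] using
    Pnorm_mulVec_mulVec_mulVec_lt hP hL hS hSS (τ 0) (τ 1) (τ 2) hx

end TwoByTwo

theorem stmt14 (S : Fin 2 → Matrix (Fin 2) (Fin 2) ℝ)
    (P : Matrix (Fin 2) (Fin 2) ℝ) (hP : P.PosDef)
    (hL : ∀ k, (P - (S k)ᵀ * P * S k).PosSemidef) :
    (∀ σ : ℕ → Fin 2, Tendsto (fun n => prodsW S σ n) atTop (nhds 0)) ↔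
      (specRad (S 0) < 1 ∧ specRad (S 1) < 1 ∧ specRad (S 0 * S 1) < 1) := by
  simp only [specRad_lt_one_iff_tendsto_pow]
  refine ⟨fun h => ⟨?_, ?_, ?_⟩, fun ⟨h0, h1, h01⟩ => tendsto_prodsW_of_tendsto_pow hP hL h0 h1 h01⟩
  · simpa [prodsW] using tendsto_pow_of_periodic S (σ := fun _ => 0) (fun _ => rfl) one_pos (h _)
  · simpa [prodsW] using tendsto_pow_of_periodic S (σ := fun _ => 1) (fun _ => rfl) one_pos (h _)
  · have halt : Function.Periodic (fun n : ℕ => if Even n then (1 : Fin 2) else 0) 2 :=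
      fun n => by simp [Nat.even_add]
    simpa [prodsW] using tendsto_pow_of_periodic S halt two_pos (h _)
end

section
/- Let S₁, S₂ ∈ ℝ^{2×2} with S₁ = √((3−√5)/2)·[[1,0],[1,1]] and S₂ = √((3−√5)/2)·[[1,1],[0,1]]. Then ‖S₁‖₂ = ‖S₂‖₂ = 1 (Euclidean operator norms), ρ(S₁) = ρ(S₂) = √((3−√5)/2) < 1, and ρ(S₁S₂) = 1. In particular, the switched system {S₁,S₂} is not absolutely stable even though both subsystems are Schur stable and share the common weak Lyapunov matrix P = I₂. -/
open Matrix Filter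
open scoped ENNReal

noncomputable def cgold : ℝ := Real.sqrt ((3 - Real.sqrt 5) / 2)

noncomputable def T1 : Matrix (Fin 2) (Fin 2) ℝ := cgold • !![1, 0; 1, 1]
noncomputable def T2 : Matrix (Fin 2) (Fin 2) ℝ := cgold • !![1, 1; 0, 1]

/-! `cgold = φ⁻¹ = -ψ` for the golden ratio `φ`, so `c² + c = 1` with `c = cgold`. Hence
`‖x‖² - ‖T1 x‖² = c (x₁ - c x₀)² ≥ 0`, with equality along `(1, c)`, and symmetrically for `T2`:
both matrices are contractions of Euclidean norm exactly `1`, which is also the Lyapunov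
inequality for `P = 1`. Moreover `T2` maps `(c, 1)` to `(1, c)` and `T1` maps it back, so `(c, 1)`
is a fixed vector of `T1 * T2`. The alternating switching signal produces the powers
`(T1 * T2) ^ k`, which fix this vector and therefore do not tend to `0`. -/

open Real in
lemma cgold_eq_neg_goldenConj : cgold = -goldenConj := by
  rw [cgold, ← sqrt_sq (neg_nonneg.2 goldenConj_neg.le)]
  congr 1
  linear_combination (-1 / 4 : ℝ) * sq_sqrt (show (0 : ℝ) ≤ 5 by norm_num)

lemma cgold_pos : 0 < cgold := by
  rw [cgold_eq_neg_goldenConj]; exact neg_pos.2 Real.goldenConj_neg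

lemma cgold_lt_one : cgold < 1 := by
  rw [cgold_eq_neg_goldenConj]; linarith [Real.neg_one_lt_goldenConj]

lemma cgold_sq_add_cgold : cgold ^ 2 + cgold = 1 := by
  rw [cgold_eq_neg_goldenConj, neg_sq, Real.goldenConj_sq]; ring

lemma cgold_mul_cgold_add_one : cgold * (cgold + 1) = 1 := by
  linear_combination cgold_sq_add_cgold

lemma add_sq_sub_cgold_sq_mul (a b : ℝ) :
    a ^ 2 + b ^ 2 - cgold ^ 2 * (a ^ 2 + (a + b) ^ 2) = cgold * (b - cgold * a) ^ 2 := by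
  linear_combination (-(a ^ 2 * (cgold + 1) + b ^ 2)) * cgold_sq_add_cgold

section

variable {n : Type*} [Fintype n]

lemma Matrix.posSemidef_sub_transpose_mul_mul {P A : Matrix n n ℝ} (hP : P.IsSymm)
    (h : ∀ x, A *ᵥ x ⬝ᵥ P *ᵥ (A *ᵥ x) ≤ x ⬝ᵥ P *ᵥ x) : (P - Aᵀ * P * A).PosSemidef := by
  refine Matrix.posSemidef_iff_dotProduct_mulVec.2 ⟨?_, fun x => ?_⟩
  · rw [IsHermitian, conjTranspose_eq_transpose_of_trivial, transpose_sub,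
      transpose_mul, transpose_mul, transpose_transpose, hP.eq, mul_assoc]
  · rw [star_trivial, sub_mulVec, dotProduct_sub, ← mulVec_mulVec, ← mulVec_mulVec,
      dotProduct_mulVec x Aᵀ, vecMul_transpose, sub_nonneg]
    exact h x

lemma EuclideanSpace.norm_eq_sqrt_dotProduct (x : EuclideanSpace ℝ n) :
    ‖x‖ = √(x.ofLp ⬝ᵥ x.ofLp) := by
  rw [EuclideanSpace.norm_eq]
  simp [dotProduct, sq]

end

lemma pnorm_one_eq_norm {d : ℕ} (x : Fin d → ℝ) : Pnorm 1 x = ‖WithLp.toLp 2 x‖ := by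
  rw [Pnorm, one_mulVec, EuclideanSpace.norm_eq_sqrt_dotProduct]

lemma popNorm_one_eq_norm_toEuclideanCLM {d : ℕ} (A : Matrix (Fin d) (Fin d) ℝ) :
    PopNorm 1 A = ‖toEuclideanCLM (𝕜 := ℝ) A‖ := by
  rw [PopNorm, ← ContinuousLinearMap.sSup_sphere_eq_norm]
  congr 1
  ext r
  constructor
  · rintro ⟨x, hx, rfl⟩
    exact ⟨WithLp.toLp 2 x, by simpa [pnorm_one_eq_norm] using hx, by simp [pnorm_one_eq_norm]⟩
  · rintro ⟨x, hx, rfl⟩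
    exact ⟨x.ofLp, by simpa [pnorm_one_eq_norm] using hx, by simp [pnorm_one_eq_norm]; rfl⟩

lemma ContinuousLinearMap.norm_eq_one_of_norm_apply_le {E F : Type*} [NormedAddCommGroup E]
    [NormedSpace ℝ E] [NormedAddCommGroup F] [NormedSpace ℝ F] (f : E →L[ℝ] F)
    (hle : ∀ x, ‖f x‖ ≤ ‖x‖) {v : E} (hv : v ≠ 0) (heq : ‖f v‖ = ‖v‖) : ‖f‖ = 1 := by
  refine le_antisymm (f.opNorm_le_bound zero_le_one (by simpa using hle)) ?_
  refine le_of_mul_le_mul_right ?_ (norm_pos_iff.2 hv)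
  simpa [heq] using f.le_opNorm v

lemma popNorm_one_eq_one {d : ℕ} {A : Matrix (Fin d) (Fin d) ℝ}
    (hle : ∀ x, A *ᵥ x ⬝ᵥ A *ᵥ x ≤ x ⬝ᵥ x) {v : Fin d → ℝ} (hv : v ≠ 0)
    (heq : A *ᵥ v ⬝ᵥ A *ᵥ v = v ⬝ᵥ v) : PopNorm 1 A = 1 := by
  rw [popNorm_one_eq_norm_toEuclideanCLM]
  refine (toEuclideanCLM (𝕜 := ℝ) A).norm_eq_one_of_norm_apply_le (fun x => ?_)
    (v := WithLp.toLp 2 v) (by simpa using hv) ?_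
  · simpa [EuclideanSpace.norm_eq_sqrt_dotProduct] using Real.sqrt_le_sqrt (hle x.ofLp)
  · simp [EuclideanSpace.norm_eq_sqrt_dotProduct, heq]

lemma Matrix.mem_spectrum_iff_fin_two {K : Type*} [Field K] (M : Matrix (Fin 2) (Fin 2) K)
    (k : K) : k ∈ spectrum K M ↔ (k - M 0 0) * (k - M 1 1) - M 0 1 * M 1 0 = 0 := by
  rw [spectrum.mem_iff, isUnit_iff_isUnit_det, isUnit_iff_ne_zero, not_ne_iff,
    Algebra.algebraMap_eq_smul_one, det_fin_two]
  simp

lemma specRad_eq_of_spectrum_eq_singleton {d : ℕ} {A : Matrix (Fin d) (Fin d) ℝ} {r : ℝ}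
    (hr : 0 ≤ r) (h : spectrum ℂ (A.map Complex.ofReal) = {(r : ℂ)}) :
    specRad A = ENNReal.ofReal r := by
  rw [specRad, spectralRadius, h, iSup_singleton, Complex.nnnorm_real]
  exact Real.enorm_eq_ofReal hr

lemma prodsW_alternating_two_mul {d K : ℕ} (S : Fin K → Matrix (Fin d) (Fin d) ℝ) (i j : Fin K)
    (k : ℕ) : prodsW S (fun n => if Even n then i else j) (2 * k) = (S j * S i) ^ k := by
  induction k with
  | zero => rfl
  | succ k ih =>
    rw [mul_add_one, prodsW, prodsW, ih, pow_succ', mul_assoc]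
    simp

lemma Matrix.not_tendsto_pow_zero_of_mulVec_eq_self {n R : Type*} [Fintype n] [DecidableEq n]
    [Ring R] [TopologicalSpace R] [IsTopologicalRing R] [T2Space R] {M : Matrix n n R}
    {v : n → R} (hv : v ≠ 0) (h : M *ᵥ v = v) :
    ¬ Tendsto (fun k => M ^ k) atTop (nhds 0) := by
  intro hM
  have hfix (k : ℕ) : M ^ k *ᵥ v = v := by
    induction k with
    | zero => simp
    | succ k ih => rw [pow_succ', ← mulVec_mulVec, ih, h]
  have hcont : Continuous fun A : Matrix n n R => A *ᵥ v :=
    continuous_id.matrix_mulVec continuous_const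
  have hlim := (hcont.tendsto 0).comp hM
  simp only [Function.comp_def, hfix, zero_mulVec] at hlim
  exact hv (tendsto_nhds_unique tendsto_const_nhds hlim)

lemma not_forall_tendsto_prodsW_zero {d K : ℕ} (S : Fin K → Matrix (Fin d) (Fin d) ℝ)
    (i j : Fin K) {v : Fin d → ℝ} (hv : v ≠ 0) (h : (S j * S i) *ᵥ v = v) :
    ¬ ∀ σ : ℕ → Fin K, Tendsto (prodsW S σ) atTop (nhds 0) := by
  intro hS
  have hlim := (hS fun n => if Even n then i else j).comp
    (strictMono_mul_left_of_pos two_pos).tendsto_atTop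
  simp only [Function.comp_def, prodsW_alternating_two_mul] at hlim
  exact not_tendsto_pow_zero_of_mulVec_eq_self hv h hlim

lemma T1_mulVec (x : Fin 2 → ℝ) : T1 *ᵥ x = ![cgold * x 0, cgold * (x 0 + x 1)] := by
  ext i; fin_cases i <;> simp [T1, mulVec, dotProduct, mul_add]

lemma T2_mulVec (x : Fin 2 → ℝ) : T2 *ᵥ x = ![cgold * (x 0 + x 1), cgold * x 1] := by
  ext i; fin_cases i <;> simp [T2, mulVec, dotProduct, mul_add]

lemma dotProduct_self_fin_two (x : Fin 2 → ℝ) : x ⬝ᵥ x = x 0 ^ 2 + x 1 ^ 2 := by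
  simp [dotProduct, sq]

lemma dotProduct_self_sub_T1_mulVec (x : Fin 2 → ℝ) :
    x ⬝ᵥ x - T1 *ᵥ x ⬝ᵥ T1 *ᵥ x = cgold * (x 1 - cgold * x 0) ^ 2 := by
  rw [← add_sq_sub_cgold_sq_mul, T1_mulVec, dotProduct_self_fin_two, dotProduct_self_fin_two]
  simp only [cons_val_zero, cons_val_one]
  ring

lemma dotProduct_self_sub_T2_mulVec (x : Fin 2 → ℝ) :
    x ⬝ᵥ x - T2 *ᵥ x ⬝ᵥ T2 *ᵥ x = cgold * (x 0 - cgold * x 1) ^ 2 := by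
  rw [← add_sq_sub_cgold_sq_mul, T2_mulVec, dotProduct_self_fin_two, dotProduct_self_fin_two]
  simp only [cons_val_zero, cons_val_one]
  ring

lemma T1_mulVec_dotProduct_self_le (x : Fin 2 → ℝ) : T1 *ᵥ x ⬝ᵥ T1 *ᵥ x ≤ x ⬝ᵥ x :=
  sub_nonneg.1 (dotProduct_self_sub_T1_mulVec x ▸ by positivity [cgold_pos])

lemma T2_mulVec_dotProduct_self_le (x : Fin 2 → ℝ) : T2 *ᵥ x ⬝ᵥ T2 *ᵥ x ≤ x ⬝ᵥ x :=
  sub_nonneg.1 (dotProduct_self_sub_T2_mulVec x ▸ by positivity [cgold_pos])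

lemma T1_mulVec_one_cgold : T1 *ᵥ ![1, cgold] = ![cgold, 1] := by
  rw [T1_mulVec]; simp [add_comm 1 cgold, cgold_mul_cgold_add_one]

lemma T2_mulVec_cgold_one : T2 *ᵥ ![cgold, 1] = ![1, cgold] := by
  rw [T2_mulVec]; simp [cgold_mul_cgold_add_one]

lemma popNorm_one_T1 : PopNorm 1 T1 = 1 := by
  refine popNorm_one_eq_one T1_mulVec_dotProduct_self_le (v := ![1, cgold])
    (ne_of_apply_ne (· 0) (by simp)) ?_
  rw [T1_mulVec_one_cgold]
  simp [add_comm]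

lemma popNorm_one_T2 : PopNorm 1 T2 = 1 := by
  refine popNorm_one_eq_one T2_mulVec_dotProduct_self_le (v := ![cgold, 1])
    (ne_of_apply_ne (· 1) (by simp)) ?_
  rw [T2_mulVec_cgold_one]
  simp [add_comm]

lemma posSemidef_one_sub_T1 : (1 - T1ᵀ * 1 * T1).PosSemidef :=
  posSemidef_sub_transpose_mul_mul isSymm_one (by simpa using T1_mulVec_dotProduct_self_le)

lemma posSemidef_one_sub_T2 : (1 - T2ᵀ * 1 * T2).PosSemidef :=
  posSemidef_sub_transpose_mul_mul isSymm_one (by simpa using T2_mulVec_dotProduct_self_le)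

lemma spectrum_T1 : spectrum ℂ (T1.map Complex.ofReal) = {(cgold : ℂ)} := by
  ext k; simp [mem_spectrum_iff_fin_two, T1, sub_eq_zero]

lemma spectrum_T2 : spectrum ℂ (T2.map Complex.ofReal) = {(cgold : ℂ)} := by
  ext k; simp [mem_spectrum_iff_fin_two, T2, sub_eq_zero]

lemma T1_mul_T2 : T1 * T2 = cgold ^ 2 • !![1, 1; 1, 2] := by
  ext i j; fin_cases i <;> fin_cases j <;> simp [T1, T2, mul_apply] <;> ring

lemma spectrum_T1_mul_T2 :
    spectrum ℂ ((T1 * T2).map Complex.ofReal) = {1, ((cgold ^ 4 : ℝ) : ℂ)} := by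
  have h : (cgold : ℂ) ^ 2 + cgold = 1 := by exact_mod_cast cgold_sq_add_cgold
  ext k
  rw [mem_spectrum_iff_fin_two]
  convert_to (k - 1) * (k - ((cgold ^ 4 : ℝ) : ℂ)) = 0 ↔ _ using 2
  · simp [T1_mul_T2]
    linear_combination k * ((cgold : ℂ) ^ 2 - cgold - 1) * h
  · simp [sub_eq_zero]

lemma specRad_T1_mul_T2 : specRad (T1 * T2) = 1 := by
  rw [specRad, spectralRadius, spectrum_T1_mul_T2, iSup_insert, iSup_singleton,
    Complex.nnnorm_real, nnnorm_one, ENNReal.coe_one, sup_eq_left, ENNReal.coe_le_one_iff,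
    ← NNReal.coe_le_one, coe_nnnorm, Real.norm_of_nonneg (by positivity)]
  exact pow_le_one₀ cgold_pos.le cgold_lt_one.le

theorem stmt16 :
    PopNorm 1 T1 = 1 ∧ PopNorm 1 T2 = 1 ∧
    specRad T1 = ENNReal.ofReal cgold ∧ specRad T2 = ENNReal.ofReal cgold ∧
    ENNReal.ofReal cgold < 1 ∧
    specRad (T1 * T2) = 1 ∧
    ((1 - T1ᵀ * 1 * T1).PosSemidef ∧ (1 - T2ᵀ * 1 * T2).PosSemidef) ∧
    ¬ (∀ σ : ℕ → Fin 2, Tendsto (fun n => prodsW ![T1, T2] σ n) atTop (nhds 0)) := by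
  have hfix : (T1 * T2) *ᵥ ![cgold, 1] = ![cgold, 1] := by
    rw [← mulVec_mulVec, T2_mulVec_cgold_one, T1_mulVec_one_cgold]
  exact ⟨popNorm_one_T1, popNorm_one_T2,
    specRad_eq_of_spectrum_eq_singleton cgold_pos.le spectrum_T1,
    specRad_eq_of_spectrum_eq_singleton cgold_pos.le spectrum_T2,
    ENNReal.ofReal_lt_one.2 cgold_lt_one, specRad_T1_mul_T2,
    ⟨posSemidef_one_sub_T1, posSemidef_one_sub_T2⟩,
    not_forall_tendsto_prodsW_zero ![T1, T2] 1 0 (ne_of_apply_ne (· 1) (by simp)) hfix⟩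
end
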